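/- arXiv:1908.09166 — 2 statements merged into one kernel-verified Lean document; each statement's English description precedes it below -/
import Mathlib

section
/- Consequence of bilinear Kakeya for rich squares: with 𝕋1, 𝕋2 as in the bilinear Kakeya setting (transversal families of δ × 1 tubes in the plane), the collection Q_{r1,r2} of pairwise disjoint δ-squares each intersecting at least r1 tubes from 𝕋1 and at least r2 tubes from 𝕋2 satisfies |Q_{r1,r2}| ≲ |𝕋1||𝕋2|/(r1 r2). -/
open MeasureTheory
open scoped Classical

/-- A `(δ,1)`-tube in the plane: a rectangle of dimensions `δ × 1` whose long axis
points in the direction `(cos φ, sin φ)` and with corner `c`. -/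
noncomputable def tube (δ φ : ℝ) (c : Fin 2 → ℝ) : Set (Fin 2 → ℝ) :=
  {x | ∃ t s : ℝ, t ∈ Set.Icc (0:ℝ) 1 ∧ s ∈ Set.Icc (0:ℝ) δ ∧
    x = c + t • ![Real.cos φ, Real.sin φ] + s • ![-Real.sin φ, Real.cos φ]}

/-- An axis-parallel `δ`-square in the plane with lower-left corner `a`. -/
def dsquare (δ : ℝ) (a : Fin 2 → ℝ) : Set (Fin 2 → ℝ) :=
  {x | ∀ k, a k ≤ x k ∧ x k ≤ a k + δ}

/-! ### Auxiliary material -/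

/-- The linear functional giving the signed distance in the direction normal to a tube of
angle `φ`. -/
noncomputable def fnl (φ : ℝ) (x : Fin 2 → ℝ) : ℝ := -Real.sin φ * x 0 + Real.cos φ * x 1

lemma fnl_tube {δ φ : ℝ} {c0 x : Fin 2 → ℝ} (hx : x ∈ tube δ φ c0) :
    fnl φ c0 ≤ fnl φ x ∧ fnl φ x ≤ fnl φ c0 + δ := by
  obtain ⟨t, s, ht, hs, rfl⟩ := hx
  have hsc := Real.sin_sq_add_cos_sq φ
  simp only [fnl, Pi.add_apply, Pi.smul_apply, smul_eq_mul, Matrix.cons_val_zero,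
    Matrix.cons_val_one, Matrix.head_cons]
  constructor <;> nlinarith [hs.1, hs.2]

lemma square_slab {δ φ : ℝ} {a c0 : Fin 2 → ℝ}
    (hmeet : (dsquare δ a ∩ tube δ φ c0).Nonempty) {x : Fin 2 → ℝ} (hx : x ∈ dsquare δ a) :
    fnl φ c0 - 2*δ ≤ fnl φ x ∧ fnl φ x ≤ (fnl φ c0 - 2*δ) + 5*δ := by
  obtain ⟨y, hyq, hyt⟩ := hmeet
  have h0x := hx 0; have h1x := hx 1; have h0y := hyq 0; have h1y := hyq 1
  have ht := fnl_tube hyt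
  have hd : |fnl φ x - fnl φ y| ≤ 2*δ := by
    have heq : fnl φ x - fnl φ y
        = -Real.sin φ * (x 0 - y 0) + Real.cos φ * (x 1 - y 1) := by
      simp only [fnl]; ring
    have hs1 : |Real.sin φ| ≤ 1 := abs_le.2 ⟨Real.neg_one_le_sin φ, Real.sin_le_one φ⟩
    have hc1 : |Real.cos φ| ≤ 1 := abs_le.2 ⟨Real.neg_one_le_cos φ, Real.cos_le_one φ⟩
    have h0 : |x 0 - y 0| ≤ δ := abs_le.2 ⟨by linarith, by linarith⟩
    have h1 : |x 1 - y 1| ≤ δ := abs_le.2 ⟨by linarith, by linarith⟩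
    calc |fnl φ x - fnl φ y|
        ≤ |(-Real.sin φ) * (x 0 - y 0)| + |Real.cos φ * (x 1 - y 1)| := by
          rw [heq]; exact abs_add_le _ _
      _ ≤ 1 * δ + 1 * δ := by
          rw [abs_mul, abs_mul, abs_neg]
          exact add_le_add (mul_le_mul hs1 h0 (abs_nonneg _) zero_le_one)
            (mul_le_mul hc1 h1 (abs_nonneg _) zero_le_one)
      _ = 2*δ := by ring
  have h := abs_le.1 hd
  exact ⟨by linarith [ht.1, h.2], by linarith [ht.2, h.1]⟩

lemma slab_volume (φ₁ φ₂ b₁ b₂ w : ℝ) (hw : 0 ≤ w) (hs : Real.sin (φ₂ - φ₁) ≠ 0) :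
    volume {x : Fin 2 → ℝ | (b₁ ≤ fnl φ₁ x ∧ fnl φ₁ x ≤ b₁ + w) ∧
        (b₂ ≤ fnl φ₂ x ∧ fnl φ₂ x ≤ b₂ + w)}
      = ENNReal.ofReal (|Real.sin (φ₂ - φ₁)|⁻¹ * (w * w)) := by
  set M : Matrix (Fin 2) (Fin 2) ℝ :=
    !![-Real.sin φ₁, Real.cos φ₁; -Real.sin φ₂, Real.cos φ₂] with hM
  set L := Matrix.toLin' M with hLdef
  have hdet : LinearMap.det L = Real.sin (φ₂ - φ₁) := by
    rw [hLdef, LinearMap.det_toLin', hM]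
    rw [Matrix.det_fin_two_of, Real.sin_sub]
    ring
  have hL : ∀ x : Fin 2 → ℝ, L x 0 = fnl φ₁ x ∧ L x 1 = fnl φ₂ x := by
    intro x
    constructor <;>
      simp [hLdef, hM, Matrix.toLin'_apply, Matrix.mulVec, dotProduct,
        Fin.sum_univ_two, fnl]
  have hpre : {x : Fin 2 → ℝ | (b₁ ≤ fnl φ₁ x ∧ fnl φ₁ x ≤ b₁ + w) ∧
        (b₂ ≤ fnl φ₂ x ∧ fnl φ₂ x ≤ b₂ + w)}
      = L ⁻¹' (Set.univ.pi fun k => Set.Icc (![b₁, b₂] k) (![b₁, b₂] k + w)) := by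
    ext x
    have h0 := (hL x).1
    have h1 := (hL x).2
    simp only [Set.mem_setOf_eq, Set.mem_preimage, Set.mem_pi, Set.mem_univ, true_implies,
      Fin.forall_fin_two, Set.mem_Icc, Matrix.cons_val_zero, Matrix.cons_val_one,
      Matrix.head_cons, h0, h1]
  rw [hpre, Measure.addHaar_preimage_linearMap volume (by rw [hdet]; exact hs),
    volume_pi_pi]
  rw [hdet]
  simp only [Fin.prod_univ_two, Matrix.cons_val_zero, Matrix.cons_val_one, Matrix.head_cons,
    Real.volume_Icc, add_sub_cancel_left]
  rw [abs_inv, ENNReal.ofReal_mul (inv_nonneg.2 (abs_nonneg _)), ENNReal.ofReal_mul hw]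

lemma dsquare_eq (δ : ℝ) (a : Fin 2 → ℝ) :
    dsquare δ a = Set.univ.pi fun k => Set.Icc (a k) (a k + δ) := by
  ext x
  simp only [dsquare, Set.mem_setOf_eq, Set.mem_pi, Set.mem_univ, true_implies, Set.mem_Icc]

lemma volume_dsquare (δ : ℝ) (a : Fin 2 → ℝ) :
    volume (dsquare δ a) = ENNReal.ofReal δ * ENNReal.ofReal δ := by
  rw [dsquare_eq, volume_pi_pi]
  simp [Real.volume_Icc, Fin.prod_univ_two, sq]

lemma measurable_dsquare (δ : ℝ) (a : Fin 2 → ℝ) : MeasurableSet (dsquare δ a) := by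
  rw [dsquare_eq]
  exact MeasurableSet.univ_pi fun k => measurableSet_Icc

lemma card_le_of_disjoint {κ : Type} {δ : ℝ} (hδ : 0 < δ) (Q' : Finset κ) (q : κ → Fin 2 → ℝ)
    (hdisj : ∀ k ∈ Q', ∀ l ∈ Q', k ≠ l → Disjoint (dsquare δ (q k)) (dsquare δ (q l)))
    (P : Set (Fin 2 → ℝ)) (hsub : ∀ k ∈ Q', dsquare δ (q k) ⊆ P)
    {V : ℝ} (hV0 : 0 ≤ V) (hV : volume P = ENNReal.ofReal V) :
    (Q'.card : ℝ) * (δ * δ) ≤ V := by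
  have hm : volume (⋃ k ∈ Q', dsquare δ (q k))
      = (Q'.card : ENNReal) * (ENNReal.ofReal δ * ENNReal.ofReal δ) := by
    rw [measure_biUnion_finset (fun k hk l hl hkl => hdisj k hk l hl hkl)
      (fun k _ => measurable_dsquare δ (q k))]
    simp [volume_dsquare, Finset.sum_const, nsmul_eq_mul]
  have hle : volume (⋃ k ∈ Q', dsquare δ (q k)) ≤ volume P :=
    measure_mono (Set.iUnion₂_subset hsub)
  rw [hm, hV] at hle
  have := ENNReal.toReal_mono (by simp) hle
  rw [ENNReal.toReal_mul, ENNReal.toReal_mul, ENNReal.toReal_ofReal hδ.le,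
    ENNReal.toReal_natCast, ENNReal.toReal_ofReal hV0] at this
  exact this

lemma sin_mono' {a b : ℝ} (ha : 0 ≤ a) (hb : b ≤ Real.pi/2) (hab : a ≤ b) :
    Real.sin a ≤ Real.sin b :=
  Real.strictMonoOn_sin.monotoneOn
    ⟨by linarith [Real.pi_pos], by linarith⟩ ⟨by linarith [Real.pi_pos], hb⟩ hab

lemma sin_c_le {c θ : ℝ} (hc : 0 < c) (h1 : c ≤ |θ|) (h2 : |θ| ≤ Real.pi - c) :
    Real.sin c ≤ |Real.sin θ| := by
  have hcpi : c ≤ Real.pi / 2 := by linarith [h1.trans h2]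
  set u := |θ| with hu
  have hu0 : 0 ≤ u := abs_nonneg θ
  have hupi : u ≤ Real.pi := by linarith
  have hsinu : 0 ≤ Real.sin u := Real.sin_nonneg_of_nonneg_of_le_pi hu0 hupi
  have habs : |Real.sin θ| = Real.sin u := by
    rcases le_or_gt 0 θ with h | h
    · rw [hu, abs_of_nonneg h] at *
      exact abs_of_nonneg hsinu
    · have : u = -θ := abs_of_neg h
      rw [this] at hsinu ⊢
      rw [Real.sin_neg] at *
      rw [abs_of_nonpos (by linarith)]
  rw [habs]
  rcases le_or_gt u (Real.pi/2) with h | h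
  · exact sin_mono' hc.le h h1
  · calc Real.sin c ≤ Real.sin (Real.pi - u) := sin_mono' hc.le (by linarith) (by linarith)
      _ = Real.sin u := Real.sin_pi_sub u

/-- The key geometric bound: a fixed transversal pair of tubes can meet at most `25/s`
pairwise disjoint `δ`-squares, where `s` is a lower bound for the sine of the angle. -/
lemma pair_bound {δ : ℝ} (hδ : 0 < δ) {κ : Type} (Q : Finset κ) (q : κ → Fin 2 → ℝ)
    (hdisj : ∀ k ∈ Q, ∀ l ∈ Q, k ≠ l → Disjoint (dsquare δ (q k)) (dsquare δ (q l)))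
    (φa φb : ℝ) (ca cb : Fin 2 → ℝ) (s : ℝ) (hs : 0 < s)
    (hsle : s ≤ |Real.sin (φb - φa)|) :
    ((Q.filter fun k => (dsquare δ (q k) ∩ tube δ φa ca).Nonempty ∧
        (dsquare δ (q k) ∩ tube δ φb cb).Nonempty).card : ℝ) ≤ 25 / s := by
  set P := {x : Fin 2 → ℝ |
      (fnl φa ca - 2*δ ≤ fnl φa x ∧ fnl φa x ≤ (fnl φa ca - 2*δ) + 5*δ) ∧
      (fnl φb cb - 2*δ ≤ fnl φb x ∧ fnl φb x ≤ (fnl φb cb - 2*δ) + 5*δ)} with hP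
  have hsne : Real.sin (φb - φa) ≠ 0 := by
    intro h; rw [h, abs_zero] at hsle; linarith
  have habs : 0 < |Real.sin (φb - φa)| := lt_of_lt_of_le hs hsle
  have hvol : volume P
      = ENNReal.ofReal (|Real.sin (φb - φa)|⁻¹ * (5*δ * (5*δ))) := by
    rw [hP]
    exact slab_volume φa φb _ _ (5*δ) (by positivity) hsne
  set Q' := Q.filter fun k => (dsquare δ (q k) ∩ tube δ φa ca).Nonempty ∧
      (dsquare δ (q k) ∩ tube δ φb cb).Nonempty with hQ'
  have hsub : ∀ k ∈ Q', dsquare δ (q k) ⊆ P := by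
    intro k hk x hx
    rw [hQ', Finset.mem_filter] at hk
    exact ⟨square_slab hk.2.1 hx, square_slab hk.2.2 hx⟩
  have hcount : (Q'.card : ℝ) * (δ * δ)
      ≤ |Real.sin (φb - φa)|⁻¹ * (5*δ * (5*δ)) := by
    refine card_le_of_disjoint hδ Q' q ?_ P hsub (by positivity) hvol
    intro k hk l hl hkl
    exact hdisj k (Finset.mem_of_mem_filter k hk) l (Finset.mem_of_mem_filter l hl) hkl
  have hδ2 : (0:ℝ) < δ * δ := by positivity
  have h25 : (Q'.card : ℝ) ≤ 25 / |Real.sin (φb - φa)| := by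
    rw [div_eq_mul_inv]
    refine le_of_mul_le_mul_right ?_ hδ2
    calc (Q'.card : ℝ) * (δ * δ) ≤ |Real.sin (φb - φa)|⁻¹ * (5*δ * (5*δ)) := hcount
      _ = 25 * |Real.sin (φb - φa)|⁻¹ * (δ * δ) := by ring
  refine h25.trans ?_
  gcongr

/-- Rich squares from bilinear Kakeya: with two transversal families of `δ × 1` tubes
(every pair making angle ≥ c), the number of pairwise disjoint `δ`-squares each
intersecting at least `r₁` tubes from `𝕋₁` and at least `r₂` tubes from `𝕋₂` is at
most `C |𝕋₁||𝕋₂|/(r₁ r₂)`. -/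
theorem stmt3 :
    ∀ c : ℝ, 0 < c → ∃ C : ℝ, 0 < C ∧ ∀ (δ : ℝ), 0 < δ →
      ∀ (ι₁ ι₂ κ : Type) (𝕋₁ : Finset ι₁) (𝕋₂ : Finset ι₂) (Q : Finset κ)
        (φ₁ : ι₁ → ℝ) (c₁ : ι₁ → Fin 2 → ℝ) (φ₂ : ι₂ → ℝ) (c₂ : ι₂ → Fin 2 → ℝ)
        (q : κ → Fin 2 → ℝ) (r₁ r₂ : ℕ),
      0 < r₁ → 0 < r₂ →
      (∀ i ∈ 𝕋₁, ∀ j ∈ 𝕋₂, c ≤ |φ₁ i - φ₂ j| ∧ |φ₁ i - φ₂ j| ≤ Real.pi - c) →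
      (∀ k ∈ Q, ∀ l ∈ Q, k ≠ l → Disjoint (dsquare δ (q k)) (dsquare δ (q l))) →
      (∀ k ∈ Q,
        r₁ ≤ (𝕋₁.filter fun i => (dsquare δ (q k) ∩ tube δ (φ₁ i) (c₁ i)).Nonempty).card) →
      (∀ k ∈ Q,
        r₂ ≤ (𝕋₂.filter fun j => (dsquare δ (q k) ∩ tube δ (φ₂ j) (c₂ j)).Nonempty).card) →
      (Q.card : ℝ) ≤ C * 𝕋₁.card * 𝕋₂.card / ((r₁ : ℝ) * r₂) := by
  intro c hc
  have hsinpos : 0 < Real.sin (min c (Real.pi/2)) := by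
    apply Real.sin_pos_of_pos_of_lt_pi
    · exact lt_min hc (by positivity)
    · calc min c (Real.pi/2) ≤ Real.pi/2 := min_le_right _ _
        _ < Real.pi := by linarith [Real.pi_pos]
  refine ⟨25 / Real.sin (min c (Real.pi/2)), by positivity, ?_⟩
  intro δ hδ ι₁ ι₂ κ 𝕋₁ 𝕋₂ Q φ₁ c₁ φ₂ c₂ q r₁ r₂ hr₁ hr₂ hangle hdisj hrich₁ hrich₂
  set C := 25 / Real.sin (min c (Real.pi/2)) with hC
  have hCpos : 0 < C := by rw [hC]; positivity
  have hrpos : (0:ℝ) < (r₁ : ℝ) * r₂ := by positivity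
  -- the double counting identity
  have hswap : ∑ p ∈ 𝕋₁ ×ˢ 𝕋₂, (Q.filter fun k =>
        (dsquare δ (q k) ∩ tube δ (φ₁ p.1) (c₁ p.1)).Nonempty ∧
        (dsquare δ (q k) ∩ tube δ (φ₂ p.2) (c₂ p.2)).Nonempty).card
      = ∑ k ∈ Q,
        (𝕋₁.filter fun i => (dsquare δ (q k) ∩ tube δ (φ₁ i) (c₁ i)).Nonempty).card *
        (𝕋₂.filter fun j => (dsquare δ (q k) ∩ tube δ (φ₂ j) (c₂ j)).Nonempty).card := by
    calc ∑ p ∈ 𝕋₁ ×ˢ 𝕋₂, (Q.filter fun k =>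
          (dsquare δ (q k) ∩ tube δ (φ₁ p.1) (c₁ p.1)).Nonempty ∧
          (dsquare δ (q k) ∩ tube δ (φ₂ p.2) (c₂ p.2)).Nonempty).card
        = ∑ p ∈ 𝕋₁ ×ˢ 𝕋₂, ∑ k ∈ Q,
            if (dsquare δ (q k) ∩ tube δ (φ₁ p.1) (c₁ p.1)).Nonempty ∧
              (dsquare δ (q k) ∩ tube δ (φ₂ p.2) (c₂ p.2)).Nonempty then 1 else 0 :=
          Finset.sum_congr rfl fun p _ => Finset.card_filter _ _
      _ = ∑ k ∈ Q, ∑ p ∈ 𝕋₁ ×ˢ 𝕋₂,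
            if (dsquare δ (q k) ∩ tube δ (φ₁ p.1) (c₁ p.1)).Nonempty ∧
              (dsquare δ (q k) ∩ tube δ (φ₂ p.2) (c₂ p.2)).Nonempty then 1 else 0 :=
          Finset.sum_comm
      _ = ∑ k ∈ Q, ((𝕋₁ ×ˢ 𝕋₂).filter fun p =>
            (dsquare δ (q k) ∩ tube δ (φ₁ p.1) (c₁ p.1)).Nonempty ∧
            (dsquare δ (q k) ∩ tube δ (φ₂ p.2) (c₂ p.2)).Nonempty).card :=
          Finset.sum_congr rfl fun k _ => (Finset.card_filter _ _).symm
      _ = _ := by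
          refine Finset.sum_congr rfl fun k _ => ?_
          rw [Finset.filter_product (fun i => (dsquare δ (q k) ∩ tube δ (φ₁ i) (c₁ i)).Nonempty)
            (fun j => (dsquare δ (q k) ∩ tube δ (φ₂ j) (c₂ j)).Nonempty), Finset.card_product]
  have hlow : Q.card * (r₁ * r₂) ≤ ∑ p ∈ 𝕋₁ ×ˢ 𝕋₂, (Q.filter fun k =>
        (dsquare δ (q k) ∩ tube δ (φ₁ p.1) (c₁ p.1)).Nonempty ∧
        (dsquare δ (q k) ∩ tube δ (φ₂ p.2) (c₂ p.2)).Nonempty).card := by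
    rw [hswap]
    have := Finset.card_nsmul_le_sum Q
      (fun k => (𝕋₁.filter fun i => (dsquare δ (q k) ∩ tube δ (φ₁ i) (c₁ i)).Nonempty).card *
        (𝕋₂.filter fun j => (dsquare δ (q k) ∩ tube δ (φ₂ j) (c₂ j)).Nonempty).card)
      (r₁ * r₂) (fun k hk => Nat.mul_le_mul (hrich₁ k hk) (hrich₂ k hk))
    simpa [smul_eq_mul] using this
  by_cases hT : 𝕋₁.Nonempty ∧ 𝕋₂.Nonempty
  · obtain ⟨⟨i₀, hi₀⟩, ⟨j₀, hj₀⟩⟩ := hT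
    have hcPi2 : c ≤ Real.pi/2 := by
      have h := hangle i₀ hi₀ j₀ hj₀
      linarith [h.1.trans h.2]
    have hmin : min c (Real.pi/2) = c := min_eq_left hcPi2
    have hsc : 0 < Real.sin c := by rw [← hmin]; exact hsinpos
    -- per-pair upper bound
    have hupper : ∀ p ∈ 𝕋₁ ×ˢ 𝕋₂, ((Q.filter fun k =>
          (dsquare δ (q k) ∩ tube δ (φ₁ p.1) (c₁ p.1)).Nonempty ∧
          (dsquare δ (q k) ∩ tube δ (φ₂ p.2) (c₂ p.2)).Nonempty).card : ℝ)
        ≤ 25 / Real.sin c := by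
      intro p hp
      rw [Finset.mem_product] at hp
      have hang := hangle p.1 hp.1 p.2 hp.2
      refine pair_bound hδ Q q hdisj (φ₁ p.1) (φ₂ p.2) (c₁ p.1) (c₂ p.2)
        (Real.sin c) hsc ?_
      have : |φ₂ p.2 - φ₁ p.1| = |φ₁ p.1 - φ₂ p.2| := abs_sub_comm _ _
      exact sin_c_le hc (this ▸ hang.1) (this ▸ hang.2)
    have hsum : ((Q.card * (r₁ * r₂) : ℕ) : ℝ)
        ≤ (25 / Real.sin c) * 𝕋₁.card * 𝕋₂.card := by
      calc ((Q.card * (r₁ * r₂) : ℕ) : ℝ)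
          ≤ ((∑ p ∈ 𝕋₁ ×ˢ 𝕋₂, (Q.filter fun k =>
              (dsquare δ (q k) ∩ tube δ (φ₁ p.1) (c₁ p.1)).Nonempty ∧
              (dsquare δ (q k) ∩ tube δ (φ₂ p.2) (c₂ p.2)).Nonempty).card : ℕ) : ℝ) := by
            exact_mod_cast hlow
        _ = ∑ p ∈ 𝕋₁ ×ˢ 𝕋₂, ((Q.filter fun k =>
              (dsquare δ (q k) ∩ tube δ (φ₁ p.1) (c₁ p.1)).Nonempty ∧
              (dsquare δ (q k) ∩ tube δ (φ₂ p.2) (c₂ p.2)).Nonempty).card : ℝ) := by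
            push_cast; ring
        _ ≤ ∑ _p ∈ 𝕋₁ ×ˢ 𝕋₂, (25 / Real.sin c) := Finset.sum_le_sum hupper
        _ = (25 / Real.sin c) * 𝕋₁.card * 𝕋₂.card := by
            rw [Finset.sum_const, Finset.card_product]
            push_cast
            ring
    have hCeq : C = 25 / Real.sin c := by rw [hC, hmin]
    rw [le_div_iff₀ hrpos, hCeq]
    calc (Q.card : ℝ) * ((r₁:ℝ) * r₂) = ((Q.card * (r₁ * r₂) : ℕ) : ℝ) := by push_cast; ring
      _ ≤ (25 / Real.sin c) * 𝕋₁.card * 𝕋₂.card := hsum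
  · -- one of the families is empty, hence Q is empty
    have hQ : Q = ∅ := by
      by_contra hne
      obtain ⟨k, hk⟩ := Finset.nonempty_iff_ne_empty.2 hne
      rcases not_and_or.1 hT with h | h
      · have h1 := hrich₁ k hk
        have : 𝕋₁ = ∅ := Finset.not_nonempty_iff_eq_empty.1 h
        rw [this] at h1
        simp at h1
        omega
      · have h2 := hrich₂ k hk
        have : 𝕋₂ = ∅ := Finset.not_nonempty_iff_eq_empty.1 h
        rw [this] at h2
        simp at h2
        omega
    rw [hQ]
    simp only [Finset.card_empty, Nat.cast_zero]
    positivity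
end

section
/- Trilinear Kakeya via Chebyshev for transversal plates: let 𝕊1, 𝕊2, 𝕊3 be finite families of δ × 1 × 1 plates in [0,1]³ whose unit normal vectors n1, n2, n3 (to plates from the three respective families) always satisfy |n1 ∧ n2 ∧ n3| ≥ c > 0, so that |S1 ∩ S2 ∩ S3| ≲ δ³ for any triple. Then the number of pairwise disjoint δ-cubes each intersecting at least r plates from each family satisfies |Q_r| ≲_c |𝕊1||𝕊2||𝕊3| / r³. -/
/-!
Three slabs of width `w` with normals `n₁, n₂, n₃` meet in the preimage of a box of volume
`w³` under the linear map with rows `n₁, n₂, n₃`, so their intersection has volume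
`w³ / |det| ≤ w³ / c`. A `δ`-cube meeting a plate lies in the `3δ`-thickening of that plate, a slab
of width `7δ`; hence a cube that is `r`-rich for each family lies in at least `r³` of the triple
intersections of thickened plates. Summing volumes over cubes and triples and using that the cubes
are disjoint gives `|Q| r³ δ³ ≤ |𝕊₁| |𝕊₂| |𝕊₃| (7δ)³ / c`.
-/

open MeasureTheory
open scoped Classical

/-- A `(δ,1,1)`-plate in `[0,1]³` with unit normal `n`: the part of the unit cube
lying in a slab of thickness `δ` orthogonal to `n`, with offset `t`. -/
def plate (δ : ℝ) (n : Fin 3 → ℝ) (t : ℝ) : Set (Fin 3 → ℝ) :=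
  {x | (∀ k, x k ∈ Set.Icc (0:ℝ) 1) ∧
    t ≤ dotProduct x n ∧ dotProduct x n ≤ t + δ}

/-- An axis-parallel `δ`-cube in `ℝ³` with corner `a`. -/
def cube3 (δ : ℝ) (a : Fin 3 → ℝ) : Set (Fin 3 → ℝ) :=
  {x | ∀ k, a k ≤ x k ∧ x k ≤ a k + δ}

open Finset
open scoped ENNReal

theorem card_mul_mul_le_card_mul_of_pairwiseDisjoint {α κ π : Type*} [MeasurableSpace α]
    (μ : Measure α)
    {Q : Finset κ} {P : Finset π} {A : κ → Set α} {T : π → Set α} {m M : ℝ≥0∞} {N : ℕ}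
    (hA : (Q : Set κ).PairwiseDisjoint A) (hAm : ∀ k ∈ Q, MeasurableSet (A k))
    (hμA : ∀ k ∈ Q, m ≤ μ (A k)) (hμT : ∀ p ∈ P, μ (T p) ≤ M)
    (hN : ∀ k ∈ Q, N ≤ #{p ∈ P | A k ⊆ T p}) :
    #Q * N * m ≤ #P * M := by
  have hcover : ∀ k ∈ Q, N * m ≤ ∑ p ∈ P, μ.restrict (T p) (A k) := by
    intro k hk
    calc (N : ℝ≥0∞) * m ≤ #{p ∈ P | A k ⊆ T p} • m := by
          rw [nsmul_eq_mul]; gcongr; exact_mod_cast hN k hk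
      _ ≤ ∑ p ∈ P with A k ⊆ T p, μ.restrict (T p) (A k) := by
          refine card_nsmul_le_sum _ _ _ fun p hp => ?_
          rw [Measure.restrict_apply (hAm k hk), Set.inter_eq_left.2 (mem_filter.1 hp).2]
          exact hμA k hk
      _ ≤ ∑ p ∈ P, μ.restrict (T p) (A k) := sum_le_sum_of_subset (filter_subset _ _)
  have hpack : ∀ p ∈ P, ∑ k ∈ Q, μ.restrict (T p) (A k) ≤ M := by
    intro p hp
    calc ∑ k ∈ Q, μ.restrict (T p) (A k) = μ.restrict (T p) (⋃ k ∈ Q, A k) :=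
          (measure_biUnion_finset hA hAm).symm
      _ ≤ μ.restrict (T p) Set.univ := measure_mono (Set.subset_univ _)
      _ = μ (T p) := Measure.restrict_apply_univ _
      _ ≤ M := hμT p hp
  calc (#Q : ℝ≥0∞) * N * m = ∑ k ∈ Q, N * m := by rw [sum_const, nsmul_eq_mul, mul_assoc]
    _ ≤ ∑ k ∈ Q, ∑ p ∈ P, μ.restrict (T p) (A k) := sum_le_sum hcover
    _ = ∑ p ∈ P, ∑ k ∈ Q, μ.restrict (T p) (A k) := sum_comm
    _ ≤ ∑ p ∈ P, M := sum_le_sum hpack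
    _ = #P * M := by rw [sum_const, nsmul_eq_mul]

def slab {ι : Type*} [Fintype ι] (w : ℝ) (n : ι → ℝ) (t : ℝ) : Set (ι → ℝ) :=
  (· ⬝ᵥ n) ⁻¹' Set.Icc t (t + w)

theorem measurableSet_slab {ι : Type*} [Fintype ι] (w : ℝ) (n : ι → ℝ) (t : ℝ) :
    MeasurableSet (slab w n t) :=
  measurableSet_Icc.preimage (by fun_prop)

theorem volume_iInter_slab {ι : Type*} [Fintype ι] [DecidableEq ι] {M : Matrix ι ι ℝ}
    (hM : M.det ≠ 0) {w : ι → ℝ} (hw : ∀ i, 0 ≤ w i) (t : ι → ℝ) :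
    volume (⋂ i, slab (w i) (M i) (t i)) = ENNReal.ofReal (|M.det|⁻¹ * ∏ i, w i) := by
  have hpre : ⋂ i, slab (w i) (M i) (t i) =
      Matrix.toLin' M ⁻¹' Set.univ.pi fun i => Set.Icc (t i) (t i + w i) := by
    ext x
    simp only [slab, Set.mem_iInter, Set.mem_preimage, Set.mem_univ_pi, Matrix.toLin'_apply,
      Matrix.mulVec, dotProduct_comm]
  rw [hpre, Measure.addHaar_preimage_linearMap _ (by rwa [LinearMap.det_toLin']),
    LinearMap.det_toLin', volume_pi_pi, abs_inv, ENNReal.ofReal_mul (by positivity),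
    ENNReal.ofReal_prod_of_nonneg fun i _ => hw i]
  simp [Real.volume_Icc]

theorem volume_slab_inter_slab_inter_slab_le {c w : ℝ} (hc : 0 < c) (hw : 0 ≤ w)
    {n₁ n₂ n₃ : Fin 3 → ℝ} (hdet : c ≤ |(Matrix.of ![n₁, n₂, n₃]).det|) (t₁ t₂ t₃ : ℝ) :
    volume (slab w n₁ t₁ ∩ slab w n₂ t₂ ∩ slab w n₃ t₃) ≤ ENNReal.ofReal (w ^ 3 / c) := by
  have hinter : slab w n₁ t₁ ∩ slab w n₂ t₂ ∩ slab w n₃ t₃ =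
      ⋂ i, slab w (Matrix.of ![n₁, n₂, n₃] i) (![t₁, t₂, t₃] i) := by
    ext x
    simp [Fin.forall_fin_succ, and_assoc]
    exact Iff.rfl
  have hdet₀ : (Matrix.of ![n₁, n₂, n₃]).det ≠ 0 := abs_pos.1 (hc.trans_le hdet)
  rw [hinter, volume_iInter_slab hdet₀ fun _ => hw]
  refine ENNReal.ofReal_le_ofReal ?_
  rw [prod_const, card_univ, Fintype.card_fin, div_eq_inv_mul]
  exact mul_le_mul_of_nonneg_right (inv_anti₀ hc hdet) (by positivity)

theorem cube3_eq_pi (δ : ℝ) (a : Fin 3 → ℝ) :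
    cube3 δ a = Set.univ.pi fun k => Set.Icc (a k) (a k + δ) := by
  ext x
  simp only [cube3, Set.mem_ofPred_eq, Set.mem_univ_pi, Set.mem_Icc]

theorem measurableSet_cube3 (δ : ℝ) (a : Fin 3 → ℝ) : MeasurableSet (cube3 δ a) := by
  rw [cube3_eq_pi]
  exact .univ_pi fun _ => measurableSet_Icc

theorem volume_cube3 {δ : ℝ} (hδ : 0 ≤ δ) (a : Fin 3 → ℝ) :
    volume (cube3 δ a) = ENNReal.ofReal (δ ^ 3) := by
  rw [cube3_eq_pi, volume_pi_pi]
  simp [Real.volume_Icc, ENNReal.ofReal_pow hδ]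

theorem abs_le_one_of_sum_sq_eq_one {ι : Type*} [Fintype ι] {n : ι → ℝ}
    (hn : ∑ k, n k ^ 2 = 1) (k : ι) : |n k| ≤ 1 := by
  rw [← sq_le_one_iff_abs_le_one, ← hn]
  exact single_le_sum (fun i _ => sq_nonneg (n i)) (mem_univ k)

theorem abs_dotProduct_sub_le_of_mem_cube3 {δ : ℝ} {a x y n : Fin 3 → ℝ}
    (hn : ∀ k, |n k| ≤ 1) (hx : x ∈ cube3 δ a) (hy : y ∈ cube3 δ a) :
    |x ⬝ᵥ n - y ⬝ᵥ n| ≤ 3 * δ := by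
  have hδ : 0 ≤ δ := by linarith [(hx 0).1, (hx 0).2]
  have hcoord : ∀ k, |(x - y) k * n k| ≤ δ := fun k => by
    rw [abs_mul]
    have : |(x - y) k| ≤ δ := abs_sub_le_iff.2 ⟨by linarith [hx k, hy k], by linarith [hx k, hy k]⟩
    nlinarith [abs_nonneg ((x - y) k), abs_nonneg (n k), hn k]
  calc |x ⬝ᵥ n - y ⬝ᵥ n| = |∑ k, (x - y) k * n k| := by rw [← sub_dotProduct]; rfl
    _ ≤ ∑ k, |(x - y) k * n k| := abs_sum_le_sum_abs _ _
    _ ≤ ∑ _k : Fin 3, δ := sum_le_sum fun k _ => hcoord k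
    _ = 3 * δ := by simp

theorem cube3_subset_slab_of_inter_plate_nonempty {δ t : ℝ} {a n : Fin 3 → ℝ}
    (hn : ∑ k, n k ^ 2 = 1) (h : (cube3 δ a ∩ plate δ n t).Nonempty) :
    cube3 δ a ⊆ slab (7 * δ) n (t - 3 * δ) := by
  obtain ⟨y, hy, -, hyt, hyt'⟩ := h
  intro x hx
  have := abs_le.1 (abs_dotProduct_sub_le_of_mem_cube3 (abs_le_one_of_sum_sq_eq_one hn) hx hy)
  constructor <;> linarith [this.1, this.2]

theorem plate_subset_slab (δ : ℝ) (n : Fin 3 → ℝ) (t : ℝ) : plate δ n t ⊆ slab δ n t :=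
  fun _ hx => hx.2

theorem volume_plate_inter_plate_inter_plate_le {c δ : ℝ} (hc : 0 < c) (hδ : 0 ≤ δ)
    {n₁ n₂ n₃ : Fin 3 → ℝ} (hdet : c ≤ |(Matrix.of ![n₁, n₂, n₃]).det|) (t₁ t₂ t₃ : ℝ) :
    volume (plate δ n₁ t₁ ∩ plate δ n₂ t₂ ∩ plate δ n₃ t₃) ≤ ENNReal.ofReal (δ ^ 3 / c) :=
  (measure_mono (Set.inter_subset_inter (Set.inter_subset_inter (plate_subset_slab _ _ _)
    (plate_subset_slab _ _ _)) (plate_subset_slab _ _ _))).trans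
    (volume_slab_inter_slab_inter_slab_le hc hδ hdet _ _ _)

section RichCubes

variable {ι₁ ι₂ ι₃ : Type*} {δ : ℝ} {𝕊₁ : Finset ι₁} {𝕊₂ : Finset ι₂} {𝕊₃ : Finset ι₃}
  {n₁ : ι₁ → Fin 3 → ℝ} {t₁ : ι₁ → ℝ} {n₂ : ι₂ → Fin 3 → ℝ} {t₂ : ι₂ → ℝ}
  {n₃ : ι₃ → Fin 3 → ℝ} {t₃ : ι₃ → ℝ}

theorem pow_three_le_card_filter_cube3_subset {q : Fin 3 → ℝ} {r : ℕ}
    (hn₁ : ∀ i ∈ 𝕊₁, ∑ k, n₁ i k ^ 2 = 1) (hn₂ : ∀ j ∈ 𝕊₂, ∑ k, n₂ j k ^ 2 = 1)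
    (hn₃ : ∀ l ∈ 𝕊₃, ∑ k, n₃ l k ^ 2 = 1)
    (h₁ : r ≤ #{i ∈ 𝕊₁ | (cube3 δ q ∩ plate δ (n₁ i) (t₁ i)).Nonempty})
    (h₂ : r ≤ #{j ∈ 𝕊₂ | (cube3 δ q ∩ plate δ (n₂ j) (t₂ j)).Nonempty})
    (h₃ : r ≤ #{l ∈ 𝕊₃ | (cube3 δ q ∩ plate δ (n₃ l) (t₃ l)).Nonempty}) :
    r ^ 3 ≤ #{p ∈ 𝕊₁ ×ˢ 𝕊₂ ×ˢ 𝕊₃ | cube3 δ q ⊆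
      slab (7 * δ) (n₁ p.1) (t₁ p.1 - 3 * δ) ∩ slab (7 * δ) (n₂ p.2.1) (t₂ p.2.1 - 3 * δ) ∩
        slab (7 * δ) (n₃ p.2.2) (t₃ p.2.2 - 3 * δ)} := by
  set F₁ := {i ∈ 𝕊₁ | (cube3 δ q ∩ plate δ (n₁ i) (t₁ i)).Nonempty}
  set F₂ := {j ∈ 𝕊₂ | (cube3 δ q ∩ plate δ (n₂ j) (t₂ j)).Nonempty}
  set F₃ := {l ∈ 𝕊₃ | (cube3 δ q ∩ plate δ (n₃ l) (t₃ l)).Nonempty}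
  refine le_trans ?_ (card_le_card (s := F₁ ×ˢ F₂ ×ˢ F₃) ?_)
  · calc r ^ 3 = r * (r * r) := by ring
      _ ≤ #F₁ * (#F₂ * #F₃) := Nat.mul_le_mul h₁ (Nat.mul_le_mul h₂ h₃)
      _ = #(F₁ ×ˢ F₂ ×ˢ F₃) := by rw [card_product, card_product]
  rintro ⟨i, j, l⟩ hp
  obtain ⟨⟨hi, hi'⟩, ⟨hj, hj'⟩, ⟨hl, hl'⟩⟩ := by
    simpa only [F₁, F₂, F₃, mem_product, mem_filter] using hp
  exact mem_filter.2 ⟨mem_product.2 ⟨hi, mem_product.2 ⟨hj, hl⟩⟩,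
    Set.subset_inter (Set.subset_inter
      (cube3_subset_slab_of_inter_plate_nonempty (hn₁ i hi) hi')
      (cube3_subset_slab_of_inter_plate_nonempty (hn₂ j hj) hj'))
      (cube3_subset_slab_of_inter_plate_nonempty (hn₃ l hl) hl')⟩

theorem card_rich_cubes_le {κ : Type*} {c : ℝ} (hc : 0 < c) (hδ : 0 < δ)
    (hn₁ : ∀ i ∈ 𝕊₁, ∑ k, n₁ i k ^ 2 = 1) (hn₂ : ∀ j ∈ 𝕊₂, ∑ k, n₂ j k ^ 2 = 1)
    (hn₃ : ∀ l ∈ 𝕊₃, ∑ k, n₃ l k ^ 2 = 1)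
    (hdet : ∀ i ∈ 𝕊₁, ∀ j ∈ 𝕊₂, ∀ l ∈ 𝕊₃, c ≤ |(Matrix.of ![n₁ i, n₂ j, n₃ l]).det|)
    {Q : Finset κ} {a : κ → Fin 3 → ℝ} {r : ℕ} (hr : 0 < r)
    (hdisj : (Q : Set κ).PairwiseDisjoint fun k => cube3 δ (a k))
    (hrich : ∀ k ∈ Q,
      r ≤ #{i ∈ 𝕊₁ | (cube3 δ (a k) ∩ plate δ (n₁ i) (t₁ i)).Nonempty} ∧
      r ≤ #{j ∈ 𝕊₂ | (cube3 δ (a k) ∩ plate δ (n₂ j) (t₂ j)).Nonempty} ∧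
      r ≤ #{l ∈ 𝕊₃ | (cube3 δ (a k) ∩ plate δ (n₃ l) (t₃ l)).Nonempty}) :
    (#Q : ℝ) ≤ 343 / c * #𝕊₁ * #𝕊₂ * #𝕊₃ / r ^ 3 := by
  have hT : ∀ p ∈ 𝕊₁ ×ˢ 𝕊₂ ×ˢ 𝕊₃, volume (slab (7 * δ) (n₁ p.1) (t₁ p.1 - 3 * δ) ∩
      slab (7 * δ) (n₂ p.2.1) (t₂ p.2.1 - 3 * δ) ∩ slab (7 * δ) (n₃ p.2.2) (t₃ p.2.2 - 3 * δ)) ≤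
      ENNReal.ofReal ((7 * δ) ^ 3 / c) := by
    rintro ⟨i, j, l⟩ hp
    obtain ⟨hi, hj, hl⟩ : i ∈ 𝕊₁ ∧ j ∈ 𝕊₂ ∧ l ∈ 𝕊₃ := by simpa only [mem_product] using hp
    exact volume_slab_inter_slab_inter_slab_le hc (by positivity) (hdet i hi j hj l hl) _ _ _
  have key := ENNReal.toReal_mono (by finiteness)
    (card_mul_mul_le_card_mul_of_pairwiseDisjoint volume hdisj
      (fun k _ => measurableSet_cube3 δ (a k)) (fun k _ => (volume_cube3 hδ.le (a k)).ge) hT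
      fun k hk => pow_three_le_card_filter_cube3_subset hn₁ hn₂ hn₃
        (hrich k hk).1 (hrich k hk).2.1 (hrich k hk).2.2)
  simp only [ENNReal.toReal_mul, ENNReal.toReal_natCast, card_product,
    ENNReal.toReal_ofReal (by positivity : (0 : ℝ) ≤ δ ^ 3),
    ENNReal.toReal_ofReal (by positivity : (0 : ℝ) ≤ (7 * δ) ^ 3 / c)] at key
  rw [le_div_iff₀ (by positivity)]
  refine le_of_mul_le_mul_right ?_ (pow_pos hδ 3)
  calc (#Q : ℝ) * r ^ 3 * δ ^ 3 = #Q * ((r ^ 3 : ℕ) : ℝ) * δ ^ 3 := by push_cast; ring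
    _ ≤ ((#𝕊₁ * (#𝕊₂ * #𝕊₃) : ℕ) : ℝ) * ((7 * δ) ^ 3 / c) := key
    _ = 343 / c * #𝕊₁ * #𝕊₂ * #𝕊₃ * δ ^ 3 := by push_cast; ring

end RichCubes

/-- Trilinear Kakeya via Chebyshev for transversal plates: if the unit normals of the
three families always satisfy `|n₁ ∧ n₂ ∧ n₃| ≥ c > 0`, then any triple intersection
has volume `≲ δ³`, and the number of pairwise disjoint δ-cubes each intersecting at
least `r` plates from each family is `≲_c |𝕊₁||𝕊₂||𝕊₃|/r³`. -/
theorem stmt4 :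
    ∀ c : ℝ, 0 < c → ∃ C : ℝ, 0 < C ∧ ∀ (δ : ℝ), 0 < δ →
      ∀ (ι₁ ι₂ ι₃ κ : Type) (𝕊₁ : Finset ι₁) (𝕊₂ : Finset ι₂) (𝕊₃ : Finset ι₃)
        (n₁ : ι₁ → Fin 3 → ℝ) (t₁ : ι₁ → ℝ) (n₂ : ι₂ → Fin 3 → ℝ) (t₂ : ι₂ → ℝ)
        (n₃ : ι₃ → Fin 3 → ℝ) (t₃ : ι₃ → ℝ),
      (∀ i ∈ 𝕊₁, ∑ k, (n₁ i k) ^ 2 = 1) →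
      (∀ i ∈ 𝕊₂, ∑ k, (n₂ i k) ^ 2 = 1) →
      (∀ i ∈ 𝕊₃, ∑ k, (n₃ i k) ^ 2 = 1) →
      (∀ i ∈ 𝕊₁, ∀ j ∈ 𝕊₂, ∀ l ∈ 𝕊₃,
        c ≤ |Matrix.det (Matrix.of ![n₁ i, n₂ j, n₃ l])|) →
      (∀ i ∈ 𝕊₁, ∀ j ∈ 𝕊₂, ∀ l ∈ 𝕊₃,
        volume (plate δ (n₁ i) (t₁ i) ∩ plate δ (n₂ j) (t₂ j) ∩ plate δ (n₃ l) (t₃ l)) ≤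
          ENNReal.ofReal (C * δ ^ 3)) ∧
      (∀ (Q : Finset κ) (a : κ → Fin 3 → ℝ) (r : ℕ), 0 < r →
        (∀ k ∈ Q, ∀ l ∈ Q, k ≠ l → Disjoint (cube3 δ (a k)) (cube3 δ (a l))) →
        (∀ k ∈ Q,
          r ≤ (𝕊₁.filter fun i => (cube3 δ (a k) ∩ plate δ (n₁ i) (t₁ i)).Nonempty).card ∧
          r ≤ (𝕊₂.filter fun j => (cube3 δ (a k) ∩ plate δ (n₂ j) (t₂ j)).Nonempty).card ∧
          r ≤ (𝕊₃.filter fun j => (cube3 δ (a k) ∩ plate δ (n₃ j) (t₃ j)).Nonempty).card) →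
        (Q.card : ℝ) ≤ C * 𝕊₁.card * 𝕊₂.card * 𝕊₃.card / (r : ℝ) ^ 3) := by
  intro c hc
  refine ⟨343 / c, by positivity, ?_⟩
  intro δ hδ ι₁ ι₂ ι₃ κ 𝕊₁ 𝕊₂ 𝕊₃ n₁ t₁ n₂ t₂ n₃ t₃ hn₁ hn₂ hn₃ hdet
  refine ⟨fun i hi j hj l hl => ?_, fun Q a r hr hdisj hrich => ?_⟩
  · refine (volume_plate_inter_plate_inter_plate_le hc hδ.le (hdet i hi j hj l hl) _ _ _).trans
      (ENNReal.ofReal_le_ofReal ?_)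
    calc δ ^ 3 / c ≤ 343 * (δ ^ 3 / c) := le_mul_of_one_le_left (by positivity) (by norm_num)
      _ = 343 / c * δ ^ 3 := by ring
  · exact card_rich_cubes_le hc hδ hn₁ hn₂ hn₃ hdet hr (fun k hk l hl => hdisj k hk l hl) hrich
end
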